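/- Let X be a 3×3 real symmetric positive-definite matrix with eigenvalues σ_1(X) ≥ σ_2(X) ≥ σ_3(X) > 0, and let R ∈ SO(3). Then 0 ≤ d(X, R·X·Rᵀ) ≤ √3 · log( σ_1(X) / σ_3(X) ), and the lower bound is achieved when R = I. In particular, the distance traversed under a rotation of X vanishes when X is isotropic and grows with the anisotropy of X. -/

import Mathlib

/-!
Write `S = X^{1/2}` and `Y = R X Rᵀ`. The Loewner bounds `σ₃ I ≤ X ≤ σ₁ I` survive conjugation by
the orthogonal `R`, so `(σ₃/σ₁) X ≤ σ₃ I ≤ Y ≤ σ₁ I ≤ (σ₁/σ₃) X`. Conjugating by `S⁻¹` turns this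
into `(σ₃/σ₁) I ≤ S⁻¹ Y S⁻¹ ≤ (σ₁/σ₃) I`, so every eigenvalue `λ` of `S⁻¹ Y S⁻¹` satisfies
`|log λ| ≤ log (σ₁/σ₃)`, and the sum of the three squares is at most `3 log² (σ₁/σ₃)`.
For `R = I` the same argument runs with ratio `1`.
-/

open Matrix

open scoped Classical in
/-- The symmetric positive-semidefinite square root of a matrix (junk value `0` if the
matrix is not positive semidefinite). -/
noncomputable def msqrt {n : ℕ} (X : Matrix (Fin n) (Fin n) ℝ) : Matrix (Fin n) (Fin n) ℝ :=
  if h : X.PosSemidef then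
    h.1.eigenvectorUnitary.1 * diagonal ((RCLike.ofReal : ℝ → ℝ) ∘ (fun x => √x) ∘ h.1.eigenvalues) *
      (star h.1.eigenvectorUnitary : Matrix (Fin n) (Fin n) ℝ)
  else 0

open scoped Classical in
/-- The geodesic distance between positive-definite matrices `X` and `Y`:
`d(X,Y) = sqrt (∑ i, (log λ_i)²)` where `λ_i` are the eigenvalues of the symmetric
positive-definite matrix `X^{-1/2} Y X^{-1/2}` (junk value `0` if that matrix is
not symmetric). -/
noncomputable def geoDist {n : ℕ} (X Y : Matrix (Fin n) (Fin n) ℝ) : ℝ :=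
  if h : ((msqrt X)⁻¹ * Y * (msqrt X)⁻¹).IsHermitian then
    Real.sqrt (∑ i, Real.log (h.eigenvalues i) ^ 2)
  else 0

open scoped MatrixOrder

lemma Real.abs_log_le_log_of_inv_le_of_le {x c : ℝ} (hc : 0 < c) (hlo : c⁻¹ ≤ x) (hhi : x ≤ c) :
    |Real.log x| ≤ Real.log c := by
  have hx : 0 < x := (inv_pos.2 hc).trans_le hlo
  refine abs_le.2 ⟨?_, Real.log_le_log hx hhi⟩
  rw [← Real.log_inv]
  exact Real.log_le_log (inv_pos.2 hc) hlo

lemma Real.sqrt_sum_sq_le_sqrt_card_mul {ι : Type*} [Fintype ι] {f : ι → ℝ} {C : ℝ}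
    (h : ∀ i, |f i| ≤ C) : √(∑ i, f i ^ 2) ≤ √(Fintype.card ι) * C := by
  rcases isEmpty_or_nonempty ι with hι | ⟨⟨i₀⟩⟩
  · simp
  have hC : 0 ≤ C := (abs_nonneg _).trans (h i₀)
  calc √(∑ i, f i ^ 2) ≤ √(∑ _i : ι, C ^ 2) :=
        Real.sqrt_le_sqrt (Finset.sum_le_sum fun i _ => sq_le_sq.2 ((h i).trans (le_abs_self C)))
    _ = √(Fintype.card ι) * C := by
        rw [Finset.sum_const, Finset.card_univ, nsmul_eq_mul, Real.sqrt_mul (Nat.cast_nonneg _),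
          Real.sqrt_sq hC]

namespace Matrix

section Loewner

variable {𝕜 ι : Type*} [RCLike 𝕜] [Fintype ι] [DecidableEq ι] {A : Matrix ι ι 𝕜}

lemma IsHermitian.smul_one_le_iff (hA : A.IsHermitian) {r : ℝ} :
    r • (1 : Matrix ι ι 𝕜) ≤ A ↔ ∀ i, r ≤ hA.eigenvalues i := by
  rw [← Algebra.algebraMap_eq_smul_one, algebraMap_le_iff_le_spectrum hA.isSelfAdjoint,
    hA.spectrum_real_eq_range_eigenvalues, Set.forall_mem_range]

lemma IsHermitian.le_smul_one_iff (hA : A.IsHermitian) {r : ℝ} :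
    A ≤ r • (1 : Matrix ι ι 𝕜) ↔ ∀ i, hA.eigenvalues i ≤ r := by
  rw [← Algebra.algebraMap_eq_smul_one, le_algebraMap_iff_spectrum_le hA.isSelfAdjoint,
    hA.spectrum_real_eq_range_eigenvalues, Set.forall_mem_range]

end Loewner

lemma PosSemidef.msqrt_eq_sqrt {n : ℕ} {X : Matrix (Fin n) (Fin n) ℝ} (hX : X.PosSemidef) :
    msqrt X = CFC.sqrt X := by
  rw [CFC.sqrt_eq_real_sqrt X hX.nonneg, cfcₙ_eq_cfc, hX.1.cfc_eq, IsHermitian.cfc, msqrt,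
    dif_pos hX, Unitary.conjStarAlgAut_apply]

end Matrix

variable {n : ℕ}

lemma geoDist_nonneg (X Y : Matrix (Fin n) (Fin n) ℝ) : 0 ≤ geoDist X Y := by
  unfold geoDist
  split_ifs
  exacts [Real.sqrt_nonneg _, le_rfl]

lemma geoDist_le_sqrt_mul_log {X Y : Matrix (Fin n) (Fin n) ℝ} (hX : X.PosDef) {c : ℝ}
    (hc : 0 < c) (hlo : c⁻¹ • X ≤ Y) (hhi : Y ≤ c • X) :
    geoDist X Y ≤ √n * Real.log c := by
  set S := CFC.sqrt X
  have hSS : S * S = X := CFC.sqrt_mul_sqrt_self X hX.posSemidef.nonneg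
  have hSdet : IsUnit S.det :=
    (isUnit_iff_isUnit_det S).1 ((CFC.isUnit_sqrt_iff X hX.posSemidef.nonneg).2 hX.isUnit)
  have hSinv : star S⁻¹ = S⁻¹ := by
    rw [star_eq_conjTranspose, conjTranspose_nonsing_inv,
      ← star_eq_conjTranspose, (CFC.sqrt_nonneg X).isSelfAdjoint.star_eq]
  have hconj (r : ℝ) : S⁻¹ * (r • X) * S⁻¹ = r • 1 := by
    rw [← hSS, Matrix.mul_smul, Matrix.smul_mul, ← Matrix.mul_assoc, nonsing_inv_mul _ hSdet,
      Matrix.one_mul, mul_nonsing_inv _ hSdet]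
  set M := S⁻¹ * Y * S⁻¹
  have hMlo : c⁻¹ • 1 ≤ M := by
    simpa only [hSinv, hconj] using star_left_conjugate_le_conjugate hlo S⁻¹
  have hMhi : M ≤ c • 1 := by
    simpa only [hSinv, hconj] using star_left_conjugate_le_conjugate hhi S⁻¹
  have hM : M.IsHermitian := by
    refine IsSelfAdjoint.isHermitian ?_
    simpa only [sub_add_cancel] using
      (IsSelfAdjoint.of_nonneg (sub_nonneg.2 hMlo)).add ((IsSelfAdjoint.all c⁻¹).smul (.one _))
  unfold geoDist
  rw [hX.posSemidef.msqrt_eq_sqrt, dif_pos hM]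
  simpa using Real.sqrt_sum_sq_le_sqrt_card_mul fun i =>
    Real.abs_log_le_log_of_inv_le_of_le hc (hM.smul_one_le_iff.1 hMlo i)
      (hM.le_smul_one_iff.1 hMhi i)

lemma geoDist_self {X : Matrix (Fin n) (Fin n) ℝ} (hX : X.PosDef) : geoDist X X = 0 :=
  le_antisymm (by simpa using geoDist_le_sqrt_mul_log hX one_pos (by simp) (by simp))
    (geoDist_nonneg X X)

lemma geoDist_conj_le_sqrt_mul_log {X R : Matrix (Fin n) (Fin n) ℝ} (hX : X.PosDef)
    (hR : Rᵀ * R = 1) {a b : ℝ} (ha : 0 < a) (hb : 0 < b) (hXa : a • 1 ≤ X) (hXb : X ≤ b • 1) :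
    geoDist X (R * X * Rᵀ) ≤ √n * Real.log (b / a) := by
  have hRstar : star Rᵀ = R := by
    rw [star_eq_conjTranspose, conjTranspose_eq_transpose_of_trivial, transpose_transpose]
  have hconj (r : ℝ) : R * (r • 1) * Rᵀ = r • 1 := by
    rw [Matrix.mul_smul, Matrix.smul_mul, Matrix.mul_one, mul_eq_one_comm.1 hR]
  have hYa : a • 1 ≤ R * X * Rᵀ := by
    simpa only [hRstar, hconj] using star_left_conjugate_le_conjugate hXa Rᵀ
  have hYb : R * X * Rᵀ ≤ b • 1 := by
    simpa only [hRstar, hconj] using star_left_conjugate_le_conjugate hXb Rᵀ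
  refine geoDist_le_sqrt_mul_log hX (div_pos hb ha) ?_ ?_
  · calc (b / a)⁻¹ • X ≤ (b / a)⁻¹ • (b • 1 : Matrix (Fin n) (Fin n) ℝ) :=
          smul_le_smul_of_nonneg_left hXb (by positivity)
      _ = a • 1 := by rw [smul_smul]; field_simp
      _ ≤ R * X * Rᵀ := hYa
  · calc R * X * Rᵀ ≤ b • 1 := hYb
      _ = (b / a) • (a • 1 : Matrix (Fin n) (Fin n) ℝ) := by rw [smul_smul]; field_simp
      _ ≤ (b / a) • X := smul_le_smul_of_nonneg_left hXa (by positivity)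

theorem stmt9_general (X : Matrix (Fin 3) (Fin 3) ℝ) (hX : X.PosDef)
    (R : Matrix (Fin 3) (Fin 3) ℝ) (hR : Rᵀ * R = 1) :
    0 ≤ geoDist X (R * X * Rᵀ) ∧
    geoDist X (R * X * Rᵀ) ≤ Real.sqrt 3 *
      Real.log (Finset.univ.sup' Finset.univ_nonempty hX.1.eigenvalues /
        Finset.univ.inf' Finset.univ_nonempty hX.1.eigenvalues) ∧
    geoDist X (1 * X * (1 : Matrix (Fin 3) (Fin 3) ℝ)ᵀ) = 0 := by
  set σ₁ := Finset.univ.sup' Finset.univ_nonempty hX.1.eigenvalues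
  set σ₃ := Finset.univ.inf' Finset.univ_nonempty hX.1.eigenvalues
  have hσ₃ : 0 < σ₃ := (Finset.lt_inf'_iff _).2 fun i _ => hX.eigenvalues_pos i
  have hσ₁ : 0 < σ₁ := (hX.eigenvalues_pos 0).trans_le (Finset.le_sup' _ (Finset.mem_univ 0))
  have hXσ₃ : σ₃ • 1 ≤ X := hX.1.smul_one_le_iff.2 fun i => Finset.inf'_le _ (Finset.mem_univ i)
  have hXσ₁ : X ≤ σ₁ • 1 := hX.1.le_smul_one_iff.2 fun i => Finset.le_sup' _ (Finset.mem_univ i)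
  refine ⟨geoDist_nonneg _ _, ?_, by simpa using geoDist_self hX⟩
  simpa using geoDist_conj_le_sqrt_mul_log hX hR hσ₃ hσ₁ hXσ₃ hXσ₁

/-- For a 3×3 real symmetric positive-definite `X` with largest eigenvalue `σ₁` and smallest
eigenvalue `σ₃`, and any rotation `R ∈ SO(3)`,
`0 ≤ d(X, R X Rᵀ) ≤ √3 · log(σ₁/σ₃)`, and the lower bound is achieved when `R = I`. -/
theorem stmt9 (X : Matrix (Fin 3) (Fin 3) ℝ) (hX : X.PosDef)
    (R : Matrix (Fin 3) (Fin 3) ℝ) (hR : Rᵀ * R = 1) (hdet : R.det = 1) :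
    0 ≤ geoDist X (R * X * Rᵀ) ∧
    geoDist X (R * X * Rᵀ) ≤ Real.sqrt 3 *
      Real.log (Finset.univ.sup' Finset.univ_nonempty hX.1.eigenvalues /
        Finset.univ.inf' Finset.univ_nonempty hX.1.eigenvalues) ∧
    geoDist X (1 * X * (1 : Matrix (Fin 3) (Fin 3) ℝ)ᵀ) = 0 :=
  stmt9_general X hX R hR
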